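/- If f(k) ∈ [k, k+γ] for all k ∈ ℕ₀ for some γ ∈ (0,1), then sup_{k∈ℕ₀} h(k,ℓ) = h(ℓ-1,ℓ) ≤ (1/Γ(γ))·Γ(ℓ+γ)/Γ(ℓ+1) for every ℓ ≥ 1, and consequently sup_k h(k,ℓ) ≤ C ℓ^{γ-1} for some constant C > 0 and all ℓ ≥ 1. -/

import Mathlib

open Finset

/-- `ChainLaw f p` says that `p ℓ k = P(X_ℓ = k)` is the law of the Markov chain
`(X_ℓ)_{ℓ ≥ 1}` with `X_1 = 0` and time-inhomogeneous transitions: from state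
`i` at time `n`, move to `i+1` with probability `f i/(n+1)`, return to `0` with
probability `1/(n+1)` if `i ≥ 1` (so that it stays at `i` with probability
`(n - f i)/(n+1)`), and, from `i = 0`, move to `1` with probability `f 0/(n+1)`
and stay at `0` otherwise.  (The chain has total mass one, so the probability
of being at `0` at time `n+1` is
`p n 0 (n+1-f 0)/(n+1) + (∑_{i ≥ 1} p n i)/(n+1) = p n 0 (n+1-f 0)/(n+1) + (1 - p n 0)/(n+1)`.) -/
def ChainLaw (f : ℕ → ℝ) (p : ℕ → ℕ → ℝ) : Prop :=
  (∀ k, p 1 k = if k = 0 then 1 else 0) ∧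
  (∀ n, 1 ≤ n →
    p (n + 1) 0 = p n 0 * (((n : ℝ) + 1 - f 0) / ((n : ℝ) + 1))
      + (1 - p n 0) * (1 / ((n : ℝ) + 1))) ∧
  (∀ n, 1 ≤ n → ∀ j, 1 ≤ j →
    p (n + 1) j = p n (j - 1) * (f (j - 1) / ((n : ℝ) + 1))
      + p n j * (((n : ℝ) - f j) / ((n : ℝ) + 1)))

/-- `Hk f p k ℓ = f k P(X_ℓ = k) - P(X_ℓ ≥ k+1)`; since `X_ℓ ≤ ℓ - 1` a.s.,
`P(X_ℓ ≥ k+1) = ∑_{j=k+1}^{ℓ-1} p ℓ j`. -/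
def Hk (f : ℕ → ℝ) (p : ℕ → ℕ → ℝ) (k ℓ : ℕ) : ℝ :=
  f k * p ℓ k - ∑ j ∈ Finset.Ico (k + 1) ℓ, p ℓ j

/-!
Write `h(k,ℓ) = Hk f p k ℓ`. The chain's transition rule turns into the linear recursions
`(ℓ+1) h(k+1,ℓ+1) = f(k+1) h(k,ℓ) + (ℓ - f(k+1)) h(k+1,ℓ)` and
`(ℓ+1) h(0,ℓ+1) = (ℓ - f 0) h(0,ℓ)`.
Since `h(·,ℓ)` vanishes from `k = ℓ` on, and `ℓ - f k ≥ 0` for `k < ℓ` when `f k ≤ k + 1`,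
induction on `ℓ` shows that `h(·,ℓ)` is nonnegative and nondecreasing up to `k = ℓ - 1`; at the
edge `k + 1 = ℓ` this uses `f ℓ ≥ ℓ`. On the diagonal the recursion reads
`(ℓ+1) h(ℓ,ℓ+1) = f ℓ h(ℓ-1,ℓ) ≤ (ℓ+γ) h(ℓ-1,ℓ)`, and `Γ(ℓ+γ)/(Γ(γ)Γ(ℓ+1))` satisfies the same
recursion with equality. Log-convexity of `Γ` (Gautschi's inequality) bounds this ratio by
`ℓ^(γ-1)/Γ(γ)`.
-/

theorem Real.Gamma_add_le_rpow_mul_Gamma_add_one {x s : ℝ} (hx : 0 < x) (hs0 : 0 < s)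
    (hs1 : s < 1) : Real.Gamma (x + s) ≤ x ^ (s - 1) * Real.Gamma (x + 1) := by
  have hΓ : 0 < Real.Gamma (x + 1) := Real.Gamma_pos_of_pos (by linarith)
  have hGx : Real.Gamma x = x⁻¹ * Real.Gamma (x + 1) := by
    rw [Real.Gamma_add_one hx.ne', inv_mul_cancel_left₀ hx.ne']
  calc Real.Gamma (x + s) = Real.Gamma ((1 - s) * x + s * (x + 1)) := by ring_nf
    _ ≤ Real.Gamma x ^ (1 - s) * Real.Gamma (x + 1) ^ s :=
      Real.Gamma_mul_add_mul_le_rpow_Gamma_mul_rpow_Gamma hx (by linarith) (by linarith) hs0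
        (by ring)
    _ = x ^ (s - 1) * Real.Gamma (x + 1) := by
      rw [hGx, Real.mul_rpow (by positivity) hΓ.le, Real.inv_rpow hx.le, ← Real.rpow_neg hx.le,
        neg_sub, mul_assoc, ← Real.rpow_add hΓ, sub_add_cancel, Real.rpow_one]

theorem Real.Gamma_add_one_add_div_Gamma_add_one_add_one {x γ : ℝ} (hx : 0 ≤ x) (hγ : 0 < γ) :
    Real.Gamma (x + 1 + γ) / Real.Gamma (x + 1 + 1)
      = (x + γ) / (x + 1) * (Real.Gamma (x + γ) / Real.Gamma (x + 1)) := by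
  have : Real.Gamma (x + 1) ≠ 0 := (Real.Gamma_pos_of_pos (by positivity)).ne'
  rw [add_right_comm, Real.Gamma_add_one (by positivity), Real.Gamma_add_one (by positivity)]
  field_simp

/-- `tailMass p n k = P(X_n ≥ k)`, using that `X_n < n`. -/
def tailMass (p : ℕ → ℕ → ℝ) (n k : ℕ) : ℝ := ∑ j ∈ Ico k n, p n j

theorem Hk_eq_sub_tailMass (f : ℕ → ℝ) (p : ℕ → ℕ → ℝ) (k n : ℕ) :
    Hk f p k n = f k * p n k - tailMass p n (k + 1) := rfl

theorem tailMass_eq_zero_of_le {p : ℕ → ℕ → ℝ} {n k : ℕ} (h : n ≤ k) : tailMass p n k = 0 := by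
  rw [tailMass, Ico_eq_empty_of_le h, sum_empty]

namespace ChainLaw

variable {f : ℕ → ℝ} {p : ℕ → ℕ → ℝ}

theorem eq_zero_of_le (hp : ChainLaw f p) {n k : ℕ} (hn : 1 ≤ n) (hk : n ≤ k) : p n k = 0 := by
  induction n, hn using Nat.le_induction generalizing k with
  | base => rw [hp.1 k, if_neg (by omega)]
  | succ n hn ih =>
    rw [hp.2.2 n hn k (by omega), ih (by omega), ih (by omega)]
    ring

theorem tailMass_eq_add (hp : ChainLaw f p) {n : ℕ} (hn : 1 ≤ n) (k : ℕ) :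
    tailMass p n k = p n k + tailMass p n (k + 1) := by
  rcases lt_or_ge k n with hkn | hkn
  · exact sum_eq_sum_Ico_succ_bot hkn _
  · rw [tailMass_eq_zero_of_le hkn, tailMass_eq_zero_of_le (by omega), hp.eq_zero_of_le hn hkn,
      add_zero]

theorem tailMass_succ (hp : ChainLaw f p) {n : ℕ} (hn : 1 ≤ n) (k : ℕ) :
    (n + 1) * tailMass p (n + 1) (k + 1) = f k * p n k + n * tailMass p n (k + 1) := by
  have beyond : ∀ k, n ≤ k →
      (n + 1) * tailMass p (n + 1) (k + 1) = f k * p n k + n * tailMass p n (k + 1) := by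
    intro k hnk
    rw [tailMass_eq_zero_of_le (by omega), tailMass_eq_zero_of_le (by omega),
      hp.eq_zero_of_le hn hnk]
    ring
  rcases le_total n k with hnk | hkn
  · exact beyond k hnk
  induction hkn using Nat.decreasingInduction with
  | self => exact beyond n le_rfl
  | of_succ k hk ih =>
    have hpk : p (n + 1) (k + 1)
        = p n k * (f k / (n + 1)) + p n (k + 1) * ((n - f (k + 1)) / (n + 1)) := by
      simpa using hp.2.2 n hn (k + 1) (by omega)
    rw [hp.tailMass_eq_add (by omega) (k + 1), hp.tailMass_eq_add hn (k + 1), mul_add, ih, hpk]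
    field_simp
    ring

theorem tailMass_zero (hp : ChainLaw f p) {n : ℕ} (hn : 1 ≤ n) : tailMass p n 0 = 1 := by
  induction n, hn using Nat.le_induction with
  | base => simp [tailMass, hp.1]
  | succ n hn ih =>
    have hT := hp.tailMass_succ hn 0
    rw [hp.tailMass_eq_add hn] at ih
    rw [hp.tailMass_eq_add (by omega), hp.2.1 n hn]
    have : ((n : ℝ) + 1) ≠ 0 := by positivity
    field_simp
    linear_combination hT + n * ih

theorem Hk_succ (hp : ChainLaw f p) {n : ℕ} (hn : 1 ≤ n) (k : ℕ) :
    (n + 1) * Hk f p (k + 1) (n + 1)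
      = f (k + 1) * Hk f p k n + (n - f (k + 1)) * Hk f p (k + 1) n := by
  have hpk : p (n + 1) (k + 1)
      = p n k * (f k / (n + 1)) + p n (k + 1) * ((n - f (k + 1)) / (n + 1)) := by
    simpa using hp.2.2 n hn (k + 1) (by omega)
  have hT := hp.tailMass_succ hn (k + 1)
  have hsplit := hp.tailMass_eq_add hn (k + 1)
  rw [Hk_eq_sub_tailMass, Hk_eq_sub_tailMass, Hk_eq_sub_tailMass, hpk]
  have : ((n : ℝ) + 1) ≠ 0 := by positivity
  field_simp
  linear_combination -hT + f (k + 1) * hsplit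

theorem Hk_zero_succ (hp : ChainLaw f p) {n : ℕ} (hn : 1 ≤ n) :
    (n + 1) * Hk f p 0 (n + 1) = (n - f 0) * Hk f p 0 n := by
  have hT := hp.tailMass_succ hn 0
  have hmass := hp.tailMass_zero hn
  rw [hp.tailMass_eq_add hn] at hmass
  rw [Hk_eq_sub_tailMass, Hk_eq_sub_tailMass, hp.2.1 n hn]
  have : ((n : ℝ) + 1) ≠ 0 := by positivity
  field_simp
  linear_combination -hT - f 0 * hmass

theorem Hk_eq_zero_of_le (hp : ChainLaw f p) {n k : ℕ} (hn : 1 ≤ n) (hk : n ≤ k) :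
    Hk f p k n = 0 := by
  rw [Hk_eq_sub_tailMass, hp.eq_zero_of_le hn hk, tailMass_eq_zero_of_le (by omega)]
  ring

theorem Hk_zero_one (hp : ChainLaw f p) : Hk f p 0 1 = f 0 := by
  rw [Hk_eq_sub_tailMass, hp.1, tailMass_eq_zero_of_le le_rfl]
  simp

theorem sub_mul_Hk_nonneg (hp : ChainLaw f p) (hf_le : ∀ k : ℕ, f k ≤ k + 1) {ℓ : ℕ}
    (hℓ : 1 ≤ ℓ) (hnn : ∀ k, 0 ≤ Hk f p k ℓ) (k : ℕ) : 0 ≤ (ℓ - f k) * Hk f p k ℓ := by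
  rcases lt_or_ge k ℓ with hk | hk
  · have : (k : ℝ) + 1 ≤ ℓ := by exact_mod_cast hk
    exact mul_nonneg (by linarith [hf_le k]) (hnn k)
  · rw [hp.Hk_eq_zero_of_le hℓ hk, mul_zero]

theorem Hk_succ_nonneg (hp : ChainLaw f p) (hf_ge : ∀ k : ℕ, (k : ℝ) ≤ f k)
    (hf_le : ∀ k : ℕ, f k ≤ k + 1) {ℓ : ℕ} (hℓ : 1 ≤ ℓ) (hnn : ∀ k, 0 ≤ Hk f p k ℓ) (k : ℕ) :
    0 ≤ Hk f p k (ℓ + 1) := by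
  refine nonneg_of_mul_nonneg_right (a := (ℓ : ℝ) + 1) ?_ (by positivity)
  cases k with
  | zero => rw [hp.Hk_zero_succ hℓ]; exact hp.sub_mul_Hk_nonneg hf_le hℓ hnn 0
  | succ k =>
    rw [hp.Hk_succ hℓ]
    exact add_nonneg (mul_nonneg ((Nat.cast_nonneg _).trans (hf_ge _)) (hnn k))
      (hp.sub_mul_Hk_nonneg hf_le hℓ hnn (k + 1))

theorem sub_mul_Hk_succ_sub_nonneg (hp : ChainLaw f p) (hf_ge : ∀ k : ℕ, (k : ℝ) ≤ f k)
    (hf_le : ∀ k : ℕ, f k ≤ k + 1) {ℓ : ℕ} (hℓ : 1 ≤ ℓ) (hnn : ∀ k, 0 ≤ Hk f p k ℓ)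
    (hmono : ∀ k, k + 1 < ℓ → Hk f p k ℓ ≤ Hk f p (k + 1) ℓ) {k : ℕ} (hk : k < ℓ) :
    0 ≤ (ℓ - f (k + 1)) * (Hk f p (k + 1) ℓ - Hk f p k ℓ) := by
  rcases (Nat.succ_le_of_lt hk).eq_or_lt with hedge | hlt
  · have : (ℓ : ℝ) ≤ f (k + 1) := by rw [← hedge]; exact hf_ge _
    rw [hp.Hk_eq_zero_of_le hℓ hedge.ge, zero_sub]
    exact mul_nonneg_of_nonpos_of_nonpos (by linarith) (neg_nonpos.2 (hnn k))
  · have : ((k + 1 : ℕ) : ℝ) + 1 ≤ ℓ := by exact_mod_cast hlt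
    exact mul_nonneg (by linarith [hf_le (k + 1)]) (sub_nonneg.2 (hmono k hlt))

theorem Hk_succ_le_succ (hp : ChainLaw f p) (hf_ge : ∀ k : ℕ, (k : ℝ) ≤ f k)
    (hf_le : ∀ k : ℕ, f k ≤ k + 1) {ℓ : ℕ} (hℓ : 1 ≤ ℓ) (hnn : ∀ k, 0 ≤ Hk f p k ℓ)
    (hmono : ∀ k, k + 1 < ℓ → Hk f p k ℓ ≤ Hk f p (k + 1) ℓ) {k : ℕ} (hk : k < ℓ) :
    Hk f p k (ℓ + 1) ≤ Hk f p (k + 1) (ℓ + 1) := by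
  have hf_nonneg : ∀ k, 0 ≤ f k := fun k => (Nat.cast_nonneg k).trans (hf_ge k)
  refine le_of_mul_le_mul_left ?_ (by positivity : (0 : ℝ) < ℓ + 1)
  have hdrift := hp.sub_mul_Hk_succ_sub_nonneg hf_ge hf_le hℓ hnn hmono hk
  -- `(ℓ+1) (h(k+1,ℓ+1) - h(k,ℓ+1)) = f k (h(k,ℓ) - h(k-1,ℓ)) + hdrift`,
  -- with `f 0 h(0,ℓ)` in place of the first term when `k = 0`
  rw [hp.Hk_succ hℓ]
  cases k with
  | zero =>
    rw [hp.Hk_zero_succ hℓ]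
    linear_combination hdrift + mul_nonneg (hf_nonneg 0) (hnn 0)
  | succ k =>
    rw [hp.Hk_succ hℓ]
    linear_combination hdrift + mul_nonneg (hf_nonneg (k + 1)) (sub_nonneg.2 (hmono k (by omega)))

theorem Hk_nonneg_and_le_succ (hp : ChainLaw f p) (hf_ge : ∀ k : ℕ, (k : ℝ) ≤ f k)
    (hf_le : ∀ k : ℕ, f k ≤ k + 1) {ℓ : ℕ} (hℓ : 1 ≤ ℓ) :
    (∀ k, 0 ≤ Hk f p k ℓ) ∧ ∀ k, k + 1 < ℓ → Hk f p k ℓ ≤ Hk f p (k + 1) ℓ := by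
  induction ℓ, hℓ using Nat.le_induction with
  | base =>
    refine ⟨fun k => ?_, fun k hk => by omega⟩
    rcases k.eq_zero_or_pos with rfl | hk
    · rw [hp.Hk_zero_one]
      exact (Nat.cast_nonneg 0).trans (hf_ge 0)
    · exact (hp.Hk_eq_zero_of_le le_rfl hk).ge
  | succ ℓ hℓ ih =>
    exact ⟨hp.Hk_succ_nonneg hf_ge hf_le hℓ ih.1,
      fun k hk => hp.Hk_succ_le_succ hf_ge hf_le hℓ ih.1 ih.2 (by omega)⟩

theorem Hk_le_Hk_self (hp : ChainLaw f p) (hf_ge : ∀ k : ℕ, (k : ℝ) ≤ f k)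
    (hf_le : ∀ k : ℕ, f k ≤ k + 1) (m k : ℕ) : Hk f p k (m + 1) ≤ Hk f p m (m + 1) := by
  obtain ⟨hnn, hmono⟩ := hp.Hk_nonneg_and_le_succ hf_ge hf_le (ℓ := m + 1) (by omega)
  rcases le_or_gt k m with hkm | hmk
  · induction hkm using Nat.decreasingInduction with
    | self => exact le_rfl
    | of_succ k hk ih => exact (hmono k (by omega)).trans ih
  · rw [hp.Hk_eq_zero_of_le (by omega) hmk]
    exact hnn m

theorem Hk_self_le_Gamma_div (hp : ChainLaw f p) {γ : ℝ} (hγ : 0 < γ)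
    (hfγ : ∀ k : ℕ, f k ≤ k + γ) (hnn : ∀ m, 0 ≤ Hk f p m (m + 1)) (m : ℕ) :
    Hk f p m (m + 1)
      ≤ 1 / Real.Gamma γ * (Real.Gamma (m + 1 + γ) / Real.Gamma (m + 1 + 1)) := by
  induction m with
  | zero =>
    have : (0 : ℝ) < Real.Gamma γ := Real.Gamma_pos_of_pos hγ
    rw [hp.Hk_zero_one, Nat.cast_zero, zero_add, add_comm, Real.Gamma_add_one hγ.ne',
      one_add_one_eq_two, Real.Gamma_two]
    field_simp
    simpa using hfγ 0
  | succ m ih =>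
    have hrec := hp.Hk_succ (n := m + 1) (by omega) m
    rw [hp.Hk_eq_zero_of_le (by omega) le_rfl, mul_zero, add_zero] at hrec
    push_cast at hrec ⊢
    rw [Real.Gamma_add_one_add_div_Gamma_add_one_add_one (by positivity) hγ]
    calc Hk f p (m + 1) (m + 1 + 1) = f (m + 1) / (m + 1 + 1) * Hk f p m (m + 1) := by
          field_simp
          linear_combination hrec
      _ ≤ (m + 1 + γ) / (m + 1 + 1)
            * (1 / Real.Gamma γ * (Real.Gamma (m + 1 + γ) / Real.Gamma (m + 1 + 1))) := by
          gcongr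
          · exact hnn m
          · exact_mod_cast hfγ (m + 1)
      _ = _ := by ring

end ChainLaw

theorem Hk_bound_stretched_general (f : ℕ → ℝ)
    (γ : ℝ) (hγ0 : 0 < γ) (hγ1 : γ < 1)
    (hf : ∀ k : ℕ, (k : ℝ) ≤ f k ∧ f k ≤ (k : ℝ) + γ)
    (p : ℕ → ℕ → ℝ) (hp : ChainLaw f p) :
    (∀ ℓ, 1 ≤ ℓ →
      (∀ k, Hk f p k ℓ ≤ Hk f p (ℓ - 1) ℓ) ∧
      Hk f p (ℓ - 1) ℓ ≤
        (1 / Real.Gamma γ) * (Real.Gamma ((ℓ : ℝ) + γ) / Real.Gamma ((ℓ : ℝ) + 1))) ∧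
    ∃ C > 0, ∀ ℓ : ℕ, 1 ≤ ℓ → ∀ k, Hk f p k ℓ ≤ C * (ℓ : ℝ) ^ (γ - 1) := by
  have hf_ge : ∀ k : ℕ, (k : ℝ) ≤ f k := fun k => (hf k).1
  have hf_le : ∀ k : ℕ, f k ≤ k + 1 := fun k => (hf k).2.trans (by linarith)
  have hsup := hp.Hk_le_Hk_self hf_ge hf_le
  have htop := hp.Hk_self_le_Gamma_div hγ0 (fun k => (hf k).2)
    fun m => (hp.Hk_nonneg_and_le_succ hf_ge hf_le (ℓ := m + 1) (by omega)).1 m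
  have hmain : ∀ ℓ, 1 ≤ ℓ → (∀ k, Hk f p k ℓ ≤ Hk f p (ℓ - 1) ℓ) ∧
      Hk f p (ℓ - 1) ℓ ≤
        (1 / Real.Gamma γ) * (Real.Gamma ((ℓ : ℝ) + γ) / Real.Gamma ((ℓ : ℝ) + 1)) := by
    intro ℓ hℓ
    obtain ⟨m, rfl⟩ := Nat.exists_eq_add_of_le' hℓ
    simp only [Nat.add_sub_cancel, Nat.cast_add, Nat.cast_one]
    exact ⟨hsup m, htop m⟩
  refine ⟨hmain, 1 / Real.Gamma γ, one_div_pos.2 (Real.Gamma_pos_of_pos hγ0), fun ℓ hℓ k => ?_⟩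
  have hℓ0 : (0 : ℝ) < ℓ := by exact_mod_cast hℓ
  calc Hk f p k ℓ ≤ 1 / Real.Gamma γ * (Real.Gamma (ℓ + γ) / Real.Gamma (ℓ + 1)) :=
        ((hmain ℓ hℓ).1 k).trans (hmain ℓ hℓ).2
    _ ≤ 1 / Real.Gamma γ * (ℓ : ℝ) ^ (γ - 1) := by
        gcongr
        rw [div_le_iff₀ (Real.Gamma_pos_of_pos (by positivity))]
        exact Real.Gamma_add_le_rpow_mul_Gamma_add_one hℓ0 hγ0 hγ1

/-- if `f k ∈ [k, k+γ]` for all `k`, with `γ ∈ (0,1)`, then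
`sup_k h(k,ℓ) = h(ℓ-1,ℓ) ≤ Γ(ℓ+γ)/(Γ(γ) Γ(ℓ+1))` for every `ℓ ≥ 1`, and
consequently `sup_k h(k,ℓ) ≤ C ℓ^{γ-1}` for some constant `C > 0`. -/
theorem Hk_bound_stretched (f : ℕ → ℝ) (hfpos : ∀ k, 0 < f k)
    (γ : ℝ) (hγ0 : 0 < γ) (hγ1 : γ < 1)
    (hf : ∀ k : ℕ, (k : ℝ) ≤ f k ∧ f k ≤ (k : ℝ) + γ)
    (p : ℕ → ℕ → ℝ) (hp : ChainLaw f p) :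
    (∀ ℓ, 1 ≤ ℓ →
      (∀ k, Hk f p k ℓ ≤ Hk f p (ℓ - 1) ℓ) ∧
      Hk f p (ℓ - 1) ℓ ≤
        (1 / Real.Gamma γ) * (Real.Gamma ((ℓ : ℝ) + γ) / Real.Gamma ((ℓ : ℝ) + 1))) ∧
    ∃ C > 0, ∀ ℓ : ℕ, 1 ≤ ℓ → ∀ k, Hk f p k ℓ ≤ C * (ℓ : ℝ) ^ (γ - 1) :=
  Hk_bound_stretched_general f γ hγ0 hγ1 hf p hp
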